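/- Define A(x) := φ(x) − φ(x+t) for x > 0. Then A is strictly increasing and negative on (0,∞), with A(x) → −∞ as x → 0⁺ and A(x) → 0 as x → ∞. Consequently, for every constant b > 0 the function x ↦ A(x) + b has a unique zero in (0,∞). -/

import Mathlib

open Real Filter Topology

/-- The digamma function `ψ(x) = d/dx log Γ(x)`. -/
noncomputable def digamma (x : ℝ) : ℝ := deriv (fun y => Real.log (Real.Gamma y)) x

/-- `φ(x) := ψ(x) - log x`. -/
noncomputable def phiFn (x : ℝ) : ℝ := digamma x - Real.log x

/-- `A(x) := φ(x) - φ(x + t)`. -/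
noncomputable def Afn (t x : ℝ) : ℝ := phiFn x - phiFn (x + t)

/-!
From `ψ(x + 1) = ψ(x) + 1/x`, the increment `φ(x) - φ(x + 1)` is
`s(x) = log (1 + 1/x) - 1/x < 0` (`phiStep`), and convexity of `log Γ` (Bohr–Mollerup) squeezes `φ(x + 1)`
between `log x - log (x + 1)` and `0`, so `φ → 0` at infinity. Telescoping then gives
`φ(x) = ∑ₙ s(x + n)`, hence `A(x) = ∑ₙ (s(x + n) - s(x + n + t))`. Since
`s'(x) = 1 / (x² (x + 1))` is strictly decreasing, every term is strictly increasing in `x`, and so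
is `A`; with `A → 0` at infinity this forces `A < 0`. Near `0`,
`A(x) = s(x) + φ(x + 1) - φ(x + t)` where `s(x) ~ -1/x`, and the unique zero of `A + b` comes from
the intermediate value theorem, `ψ` being continuous because `1/Γ` is entire.
-/

open Set

lemma contDiff_inv_Gamma {n : WithTop ℕ∞} : ContDiff ℝ n fun x => (Gamma x)⁻¹ := by
  have h := (Complex.differentiable_one_div_Gamma.contDiff (n := n)).real_of_complex
  have hre : (fun x : ℝ => (Gamma x)⁻¹) = fun x : ℝ => (Complex.Gamma x)⁻¹.re := by
    funext x
    rw [Complex.Gamma_ofReal, ← Complex.ofReal_inv, Complex.ofReal_re]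
  rwa [hre]

lemma continuousOn_digamma : ContinuousOn digamma {x | Gamma x ≠ 0} := by
  have hopen : IsOpen {x : ℝ | Gamma x ≠ 0} := by
    have : {x : ℝ | Gamma x ≠ 0} = (fun x => (Gamma x)⁻¹) ⁻¹' {0}ᶜ := by
      ext x; simp
    rw [this]
    exact isOpen_compl_singleton.preimage (contDiff_inv_Gamma (n := 0)).continuous
  have hsmooth : ContDiffOn ℝ 1 (fun x => -log (Gamma x)⁻¹) {x | Gamma x ≠ 0} :=
    (contDiff_inv_Gamma.contDiffOn.log fun x hx => inv_ne_zero hx).neg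
  have hderiv : digamma = deriv fun x => -log (Gamma x)⁻¹ := by
    funext x; simp only [digamma, Real.log_inv, neg_neg]
  rw [hderiv]
  exact hsmooth.continuousOn_deriv_of_isOpen hopen le_rfl

lemma log_Gamma_add_one {x : ℝ} (hx : 0 < x) :
    log (Gamma (x + 1)) = log (Gamma x) + log x := by
  rw [Gamma_add_one hx.ne', log_mul hx.ne' (Gamma_pos_of_pos hx).ne', add_comm]

lemma differentiableAt_log_Gamma {x : ℝ} (hx : 0 < x) :
    DifferentiableAt ℝ (fun y => log (Gamma y)) x :=
  (differentiableAt_Gamma fun m => ((neg_nonpos.mpr m.cast_nonneg).trans_lt hx).ne').log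
    (Gamma_pos_of_pos hx).ne'

lemma digamma_add_one {x : ℝ} (hx : 0 < x) : digamma (x + 1) = digamma x + x⁻¹ := by
  rw [digamma, digamma, ← deriv_comp_add_const, ← deriv_log,
    ← deriv_add (differentiableAt_log_Gamma hx) (differentiableAt_log hx.ne')]
  apply EventuallyEq.deriv_eq
  filter_upwards [eventually_gt_nhds hx] with y hy using log_Gamma_add_one hy

lemma log_le_digamma_add_one {x : ℝ} (hx : 0 < x) : log x ≤ digamma (x + 1) := by
  have h := convexOn_log_Gamma.slope_le_deriv (mem_Ioi.mpr hx) (mem_Ioi.mpr (by linarith))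
    (lt_add_one x) (differentiableAt_log_Gamma (by linarith))
  rwa [slope_def_field, add_sub_cancel_left, div_one, Function.comp_apply, Function.comp_apply,
    log_Gamma_add_one hx, add_sub_cancel_left] at h

lemma digamma_le_log {x : ℝ} (hx : 0 < x) : digamma x ≤ log x := by
  have h := convexOn_log_Gamma.deriv_le_slope (mem_Ioi.mpr hx) (mem_Ioi.mpr (by linarith))
    (lt_add_one x) (differentiableAt_log_Gamma hx)
  rwa [slope_def_field, add_sub_cancel_left, div_one, Function.comp_apply, Function.comp_apply,
    log_Gamma_add_one hx, add_sub_cancel_left] at h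

lemma tendsto_phiFn_atTop : Tendsto phiFn atTop (𝓝 0) := by
  have hlower : Tendsto (fun x => -log (1 + x⁻¹)) atTop (𝓝 0) := by
    have h : Tendsto (fun x : ℝ => 1 + x⁻¹) atTop (𝓝 1) := by
      simpa using tendsto_inv_atTop_zero.const_add (1 : ℝ)
    simpa using ((continuousAt_log one_ne_zero).tendsto.comp h).neg
  have hshift : Tendsto (fun x => phiFn (x + 1)) atTop (𝓝 0) := by
    refine tendsto_of_tendsto_of_tendsto_of_le_of_le' hlower tendsto_const_nhds ?_ ?_
    · filter_upwards [eventually_gt_atTop 0] with x hx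
      have h1 : log (1 + x⁻¹) = log (x + 1) - log x := by
        rw [← log_div (by linarith) hx.ne', add_div, div_self hx.ne', one_div, add_comm]
      rw [phiFn, h1]
      linarith [log_le_digamma_add_one hx]
    · filter_upwards [eventually_gt_atTop 0] with x hx
      exact sub_nonpos.mpr (digamma_le_log (by linarith))
  refine (hshift.comp (tendsto_atTop_add_const_right _ (-1) tendsto_id)).congr fun x => ?_
  simp

noncomputable def phiStep (x : ℝ) : ℝ := log (x + 1) - log x - x⁻¹

lemma phiFn_sub_phiFn_add_one {x : ℝ} (hx : 0 < x) : phiFn x - phiFn (x + 1) = phiStep x := by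
  rw [phiFn, phiFn, phiStep, digamma_add_one hx]
  ring

lemma phiStep_neg {x : ℝ} (hx : 0 < x) : phiStep x < 0 := by
  have h := log_lt_sub_one_of_pos (by positivity : 0 < (x + 1) / x)
    (by rw [ne_eq, div_eq_one_iff_eq hx.ne']; linarith)
  rw [log_div (by linarith) hx.ne', add_div, div_self hx.ne', one_div] at h
  rw [phiStep]
  linarith

lemma hasDerivAt_phiStep {x : ℝ} (hx : 0 < x) :
    HasDerivAt phiStep (1 / (x ^ 2 * (x + 1))) x := by
  have h : HasDerivAt (fun y => log (y + 1) - log y - y⁻¹) (1 / (x + 1) - x⁻¹ - -(x ^ 2)⁻¹) x :=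
    ((((hasDerivAt_id x).add_const 1).log (by rw [id]; positivity)).sub
      (hasDerivAt_log hx.ne')).sub (hasDerivAt_inv hx.ne')
  refine h.congr_deriv ?_
  field_simp
  ring

lemma strictMonoOn_phiStep_sub_phiStep_add {t : ℝ} (ht : 0 < t) :
    StrictMonoOn (fun x => phiStep x - phiStep (x + t)) (Ioi 0) := by
  have hderiv {x : ℝ} (hx : 0 < x) : HasDerivAt (fun x => phiStep x - phiStep (x + t))
      (1 / (x ^ 2 * (x + 1)) - 1 / ((x + t) ^ 2 * (x + t + 1))) x :=
    (hasDerivAt_phiStep hx).sub ((hasDerivAt_phiStep (by linarith)).comp_add_const x t)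
  refine strictMonoOn_of_hasDerivWithinAt_pos (convex_Ioi 0)
    (fun x hx => (hderiv hx).continuousAt.continuousWithinAt)
    (fun x hx => (hderiv (interior_subset hx : 0 < x)).hasDerivWithinAt) fun x hx => ?_
  rw [interior_Ioi] at hx
  have hx : 0 < x := hx
  rw [sub_pos]
  apply one_div_lt_one_div_of_lt (by positivity)
  have : x ^ 2 < (x + t) ^ 2 := by nlinarith
  nlinarith [sq_nonneg x]

lemma hasSum_phiStep {x : ℝ} (hx : 0 < x) : HasSum (fun n : ℕ => phiStep (x + n)) (phiFn x) := by
  have hpartial (N : ℕ) : ∑ n ∈ Finset.range N, phiStep (x + n) = phiFn x - phiFn (x + N) := by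
    have h := Finset.sum_range_sub' (fun n : ℕ => phiFn (x + n)) N
    simp only [Nat.cast_zero, add_zero, Nat.cast_succ, ← add_assoc] at h
    rw [← h]
    exact Finset.sum_congr rfl fun n _ => (phiFn_sub_phiFn_add_one (by positivity)).symm
  have hlim : Tendsto (fun N : ℕ => phiFn x - phiFn (x + N)) atTop (𝓝 (phiFn x)) := by
    simpa using tendsto_const_nhds.sub
      (tendsto_phiFn_atTop.comp (tendsto_atTop_add_const_left _ x tendsto_natCast_atTop_atTop))
  -- the terms are negative, so convergence of the partial sums is enough
  have hneg : HasSum (fun n : ℕ => -phiStep (x + n)) (-phiFn x) := by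
    refine (hasSum_iff_tendsto_nat_of_nonneg (fun n => ?_) _).mpr ?_
    · exact (neg_pos.mpr (phiStep_neg (by positivity))).le
    · simpa only [Finset.sum_neg_distrib, hpartial] using hlim.neg
  simpa using hneg.neg

lemma hasSum_Afn {t x : ℝ} (ht : 0 ≤ t) (hx : 0 < x) :
    HasSum (fun n : ℕ => phiStep (x + n) - phiStep (x + n + t)) (Afn t x) := by
  have h := (hasSum_phiStep hx).sub (hasSum_phiStep (by positivity : 0 < x + t))
  simpa only [Afn, add_right_comm x t] using h

lemma strictMonoOn_Afn {t : ℝ} (ht : 0 < t) : StrictMonoOn (Afn t) (Ioi 0) := by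
  intro x (hx : 0 < x) y (hy : 0 < y) hxy
  have hterm := strictMonoOn_phiStep_sub_phiStep_add ht
  have hle (n : ℕ) :
      phiStep (x + n) - phiStep (x + n + t) ≤ phiStep (y + n) - phiStep (y + n + t) :=
    (hterm (by positivity : 0 < x + n) (by positivity : 0 < y + n) (by linarith)).le
  exact hasSum_lt hle (i := 0) (by simpa using hterm hx hy hxy) (hasSum_Afn ht.le hx)
    (hasSum_Afn ht.le hy)

lemma tendsto_Afn_atTop (t : ℝ) : Tendsto (Afn t) atTop (𝓝 0) := by
  have h := tendsto_phiFn_atTop.sub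
    (tendsto_phiFn_atTop.comp (tendsto_atTop_add_const_right _ t tendsto_id))
  rwa [sub_zero] at h

lemma continuousOn_phiFn : ContinuousOn phiFn (Ioi 0) :=
  (continuousOn_digamma.mono fun _ hx => (Gamma_pos_of_pos hx).ne').sub
    (continuousOn_log.mono fun _ hx => (ne_of_gt hx))

lemma continuousOn_Afn {t : ℝ} (ht : 0 ≤ t) : ContinuousOn (Afn t) (Ioi 0) :=
  continuousOn_phiFn.sub (continuousOn_phiFn.comp (continuous_add_const t).continuousOn
    fun x hx => (lt_add_of_pos_of_le hx ht : 0 < x + t))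

lemma tendsto_phiStep_nhdsGT_zero : Tendsto phiStep (𝓝[>] 0) atBot := by
  have hlog : Tendsto (fun x => log (x + 1)) (𝓝[>] 0) (𝓝 0) := by
    have h := ((continuous_add_const (1 : ℝ)).tendsto 0).log (by norm_num)
    simpa using tendsto_nhdsWithin_of_tendsto_nhds h
  have hsing : Tendsto (fun x => x⁻¹ * (log x * x + 1)) (𝓝[>] 0) atTop := by
    refine tendsto_inv_nhdsGT_zero.atTop_mul_pos one_pos ?_
    simpa using (tendsto_log_mul_rpow_nhdsGT_zero one_pos).add_const 1
  refine (hlog.add_atBot (tendsto_neg_atTop_atBot.comp hsing)).congr' ?_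
  filter_upwards [self_mem_nhdsWithin] with x (hx : 0 < x)
  simp only [Function.comp_apply, phiStep]
  field_simp
  ring

lemma tendsto_Afn_nhdsGT_zero {t : ℝ} (ht : 0 < t) : Tendsto (Afn t) (𝓝[>] 0) atBot := by
  have hshift {c : ℝ} (hc : 0 < c) : Tendsto (fun x => phiFn (x + c)) (𝓝[>] 0) (𝓝 (phiFn c)) := by
    have h := (continuousOn_phiFn.continuousAt (Ioi_mem_nhds hc)).tendsto.comp
      ((continuous_add_const c).tendsto' 0 c (zero_add c))
    exact tendsto_nhdsWithin_of_tendsto_nhds h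
  refine (tendsto_phiStep_nhdsGT_zero.atBot_add ((hshift one_pos).sub (hshift ht))).congr' ?_
  filter_upwards [self_mem_nhdsWithin] with x (hx : 0 < x)
  rw [← phiFn_sub_phiFn_add_one hx, Afn]
  ring

lemma StrictMonoOn.lt_of_tendsto_atTop {α β : Type*} [LinearOrder α] [NoMaxOrder α]
    [LinearOrder β] [TopologicalSpace β] [OrderClosedTopology β] {f : α → β} {a : α} {L : β}
    (hf : StrictMonoOn f (Ioi a)) (hlim : Tendsto f atTop (𝓝 L)) {x : α} (hx : a < x) :
    f x < L := by
  have : Nonempty α := ⟨x⟩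
  obtain ⟨y, hxy⟩ := exists_gt x
  have hy : a < y := hx.trans hxy
  refine (hf hx hy hxy).trans_le (ge_of_tendsto hlim ?_)
  filter_upwards [eventually_ge_atTop y] with z hz
  exact hf.monotoneOn hy (hy.trans_le hz) hz

lemma StrictMonoOn.existsUnique_eq_of_tendsto {α β : Type*} [ConditionallyCompleteLinearOrder α]
    [TopologicalSpace α] [OrderTopology α] [DenselyOrdered α] [NoMaxOrder α] [LinearOrder β]
    [TopologicalSpace β] [OrderClosedTopology β] {f : α → β} {a : α} {L c : β}
    (hmono : StrictMonoOn f (Ioi a)) (hcont : ContinuousOn f (Ioi a))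
    (hbot : Tendsto f (𝓝[>] a) atBot) (htop : Tendsto f atTop (𝓝 L)) (hc : c < L) :
    ∃! x, a < x ∧ f x = c := by
  obtain ⟨x, hx, hfx⟩ := isPreconnected_Ioi.intermediate_value_Iio (l₁ := 𝓝[>] a) inf_le_right
    (le_principal_iff.mpr (Ioi_mem_atTop a)) hcont hbot htop hc
  exact ⟨x, ⟨hx, hfx⟩, fun y ⟨hy, hfy⟩ => hmono.injOn hy hx (hfy.trans hfx.symm)⟩

/-- for `t = d/2` with `d ≥ 1` an integer, the function `A(x) = φ(x) − φ(x+t)`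
is strictly increasing and negative on `(0,∞)`, tends to `-∞` as `x → 0⁺` and to `0` as
`x → ∞`; consequently for every `b > 0` the function `x ↦ A(x) + b` has a unique zero
in `(0,∞)`. -/
theorem A_strictMono_neg_limits_unique_zero (d : ℕ) (hd : 1 ≤ d) (t : ℝ) (ht : t = d / 2) :
    StrictMonoOn (Afn t) (Set.Ioi (0 : ℝ)) ∧
    (∀ x > (0 : ℝ), Afn t x < 0) ∧
    Tendsto (Afn t) (nhdsWithin 0 (Set.Ioi 0)) atBot ∧
    Tendsto (Afn t) atTop (nhds 0) ∧
    (∀ b > (0 : ℝ), ∃! x : ℝ, x > 0 ∧ Afn t x + b = 0) := by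
  have htpos : 0 < t := by
    rw [ht]
    have : (1 : ℝ) ≤ d := by exact_mod_cast hd
    positivity
  have hmono := strictMonoOn_Afn htpos
  have htop := tendsto_Afn_atTop t
  have hbot := tendsto_Afn_nhdsGT_zero htpos
  refine ⟨hmono, fun x hx => hmono.lt_of_tendsto_atTop htop hx, hbot, htop, fun b hb => ?_⟩
  simpa only [← eq_neg_iff_add_eq_zero] using
    hmono.existsUnique_eq_of_tendsto (continuousOn_Afn htpos.le) hbot htop (neg_lt_zero.mpr hb)
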